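/- (Exactness of the TFPM midpoint derivative formula.) Let ξ ≠ 0 be a real number, h > 0, and let u : ℝ → ℝ be of the form u(x) = a·e^{ξx} + b·e^{−ξx} + c for real constants a, b, c. Then for every x ∈ ℝ, the derivative at the midpoint satisfies u'(x + h/2) = ξ·(u(x + h) − u(x)) / (e^{ξh/2} − e^{−ξh/2}). -/
import Mathlib


open Real

/-- Exactness of the TFPM midpoint derivative formula: if
`u(x) = a·e^{ξx} + b·e^{−ξx} + c` with `ξ ≠ 0` and `h > 0`, then for every `x`,
`u'(x + h/2) = ξ·(u(x + h) − u(x)) / (e^{ξh/2} − e^{−ξh/2})`. -/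
theorem tfpm_midpoint_derivative_exact
    (ξ h a b c : ℝ) (hξ : ξ ≠ 0) (hh : 0 < h)
    (u : ℝ → ℝ)
    (hu : ∀ x, u x = a * Real.exp (ξ * x) + b * Real.exp (-(ξ * x)) + c) :
    ∀ x : ℝ,
      deriv u (x + h / 2)
        = ξ * (u (x + h) - u x) /
            (Real.exp (ξ * h / 2) - Real.exp (-(ξ * h / 2))) := by
  intro x
  have hufun : u = fun x => a * Real.exp (ξ * x) + b * Real.exp (-(ξ * x)) + c :=
    funext hu
  set y := x + h / 2 with hy
  have hd : HasDerivAt u (a * (Real.exp (ξ * y) * ξ) + b * (Real.exp (-(ξ * y)) * (-ξ))) y := by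
    rw [hufun]
    have h1 : HasDerivAt (fun t : ℝ => Real.exp (ξ * t)) (Real.exp (ξ * y) * ξ) y := by
      simpa using ((hasDerivAt_id y).const_mul ξ).exp
    have h2 : HasDerivAt (fun t : ℝ => Real.exp (-(ξ * t))) (Real.exp (-(ξ * y)) * (-ξ)) y := by
      simpa using (((hasDerivAt_id y).const_mul ξ).neg).exp
    exact ((h1.const_mul a).add (h2.const_mul b)).add_const c
  rw [hd.deriv]
  have hD : Real.exp (ξ * h / 2) - Real.exp (-(ξ * h / 2)) ≠ 0 := by
    intro hcon
    have : Real.exp (ξ * h / 2) = Real.exp (-(ξ * h / 2)) := by linarith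
    have := Real.exp_injective this
    have : ξ * h = 0 := by linarith
    exact (mul_ne_zero hξ (ne_of_gt hh)) this
  rw [hu, hu, eq_div_iff hD]
  have e1 : ξ * (x + h) = (ξ * x) + ξ * h / 2 + ξ * h / 2 := by ring
  have e2 : -(ξ * x + ξ * h / 2 + ξ * h / 2) = (-(ξ * x)) + (-(ξ * h / 2)) + (-(ξ * h / 2)) := by ring
  have e3 : ξ * y = ξ * x + ξ * h / 2 := by rw [hy]; ring
  have e4 : -(ξ * x + ξ * h / 2) = (-(ξ * x)) + (-(ξ * h / 2)) := by ring
  rw [e1, e3, e2, e4]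
  simp only [Real.exp_add]
  have key : Real.exp (-(ξ * h / 2)) * Real.exp (ξ * h / 2) = 1 := by
    rw [← Real.exp_add]; simp
  linear_combination (-ξ * (a * Real.exp (ξ * x) + b * Real.exp (-(ξ * x)))) * key
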